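/- Monotonicity of geometric mixtures along the risk parameter: For fixed full-support distributions P, Q_B on a finite alphabet with P ≠ Q_B, the map η ↦ D(Q^η‖P), where Q^η(x) ∝ P(x)^{1−η} Q_B(x)^η, is strictly increasing on [0,1], with D(Q^0‖P) = 0. -/

import Mathlib

open Finset Real

noncomputable def klDiv {X : Type} [Fintype X] (p q : X → ℝ) : ℝ :=
  ∑ x, p x * Real.logb 2 (p x / q x)

private lemma cs_pos {X : Type} [Fintype X] [Nonempty X] (a w : X → ℝ)
    (ha : ∀ x, 0 < a x) {x1 x2 : X} (hw : w x1 ≠ w x2) :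
    0 < (∑ x, a x * w x ^ 2) * (∑ x, a x) - (∑ x, a x * w x) ^ 2 := by
  have hZpos : 0 < ∑ x, a x := Finset.sum_pos (fun x _ => ha x) Finset.univ_nonempty
  set Z := ∑ x, a x with hZ
  set c := (∑ x, a x * w x) / Z with hc
  have expand : ∑ x, a x * (w x - c) ^ 2
      = (∑ x, a x * w x ^ 2) - 2 * c * (∑ x, a x * w x) + c ^ 2 * Z := by
    have h : ∀ x ∈ Finset.univ (α := X), a x * (w x - c) ^ 2
        = a x * w x ^ 2 - 2 * c * (a x * w x) + c ^ 2 * a x := fun x _ => by ring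
    rw [Finset.sum_congr rfl h, Finset.sum_add_distrib, Finset.sum_sub_distrib,
      ← Finset.mul_sum, ← Finset.mul_sum]
  have hxc : w x1 ≠ c ∨ w x2 ≠ c := by
    by_contra h; push_neg at h; exact hw (h.1.trans h.2.symm)
  have hterm : ∀ x, w x ≠ c → 0 < a x * (w x - c) ^ 2 := fun x hx =>
    mul_pos (ha x)
      (lt_of_le_of_ne (sq_nonneg _) (Ne.symm (pow_ne_zero 2 (sub_ne_zero.mpr hx))))
  have hpos : 0 < ∑ x, a x * (w x - c) ^ 2 := by
    obtain hx | hx := hxc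
    · exact Finset.sum_pos' (fun x _ => mul_nonneg (ha x).le (sq_nonneg _))
        ⟨x1, Finset.mem_univ _, hterm x1 hx⟩
    · exact Finset.sum_pos' (fun x _ => mul_nonneg (ha x).le (sq_nonneg _))
        ⟨x2, Finset.mem_univ _, hterm x2 hx⟩
  have key : (∑ x, a x * w x ^ 2) * Z - (∑ x, a x * w x) ^ 2
      = Z * ∑ x, a x * (w x - c) ^ 2 := by
    rw [expand, hc]
    field_simp
    ring
  rw [key]
  exact mul_pos hZpos hpos

theorem geometric_mixture_klDiv_strictMonoOn
    {X : Type} [Fintype X] [Nonempty X]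
    (P QB : X → ℝ)
    (hPpos : ∀ x, 0 < P x) (hQpos : ∀ x, 0 < QB x)
    (hP1 : ∑ x, P x = 1) (hQ1 : ∑ x, QB x = 1)
    (hne : P ≠ QB) :
    letI Qmix : ℝ → X → ℝ := fun η x =>
      P x ^ (1 - η) * QB x ^ η / ∑ y, P y ^ (1 - η) * QB y ^ η
    StrictMonoOn (fun η => klDiv (Qmix η) P) (Set.Icc (0 : ℝ) 1) ∧
      klDiv (Qmix 0) P = 0 := by
  have hlog2 : (0:ℝ) < Real.log 2 := Real.log_pos one_lt_two
  set w : X → ℝ := fun x => Real.log (QB x / P x) with hwdef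
  set Z : ℝ → ℝ := fun η => ∑ x, P x * rexp (η * w x) with hZdef
  set N : ℝ → ℝ := fun η => ∑ x, P x * w x * rexp (η * w x) with hNdef
  set M : ℝ → ℝ := fun η => ∑ x, P x * w x ^ 2 * rexp (η * w x) with hMdef
  have hZpos : ∀ η, 0 < Z η := fun η =>
    Finset.sum_pos (fun x _ => mul_pos (hPpos x) (Real.exp_pos _)) Finset.univ_nonempty
  -- the mixture numerator in exponential form
  have hmix : ∀ (η : ℝ) (x : X), P x ^ (1 - η) * QB x ^ η = P x * rexp (η * w x) := by
    intro η x
    have hp := hPpos x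
    have hq := hQpos x
    have h1 : rexp (η * w x) = (QB x / P x) ^ η := by
      rw [hwdef, Real.rpow_def_of_pos (div_pos hq hp), mul_comm]
    rw [h1, Real.div_rpow hq.le hp.le, Real.rpow_sub hp, Real.rpow_one]
    have hpe : P x ^ η ≠ 0 := (Real.rpow_pos_of_pos hp η).ne'
    field_simp
  -- nonconstancy of w
  have hwne : ∃ x1 x2, w x1 ≠ w x2 := by
    by_contra h
    push_neg at h
    apply hne
    have x0 : X := Classical.arbitrary X
    set c := QB x0 / P x0 with hcdef
    have hc : ∀ x, QB x / P x = c := by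
      intro x
      have hwx : w x = w x0 := h x x0
      have e1 : rexp (w x) = QB x / P x := by
        rw [hwdef]; exact Real.exp_log (div_pos (hQpos x) (hPpos x))
      have e2 : rexp (w x0) = QB x0 / P x0 := by
        rw [hwdef]; exact Real.exp_log (div_pos (hQpos x0) (hPpos x0))
      rw [hcdef, ← e1, ← e2, hwx]
    have hQc : ∀ x, QB x = c * P x := fun x => (div_eq_iff (hPpos x).ne').mp (hc x)
    have hsum : ∑ x, QB x = c * ∑ x, P x := by
      rw [Finset.mul_sum]
      exact Finset.sum_congr rfl fun x _ => hQc x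
    rw [hQ1, hP1, mul_one] at hsum
    have hc1 : c = 1 := hsum.symm
    funext x
    rw [hQc x, hc1, one_mul]
  obtain ⟨x1, x2, hw12⟩ := hwne
  -- the smooth representation F
  set F : ℝ → ℝ := fun η => (η * N η / Z η - Real.log (Z η)) / Real.log 2 with hFdef
  -- KL equals F
  have hkl : ∀ η : ℝ,
      klDiv (fun x => P x ^ (1 - η) * QB x ^ η / ∑ y, P y ^ (1 - η) * QB y ^ η) P = F η := by
    intro η
    have hden : (∑ y, P y ^ (1 - η) * QB y ^ η) = Z η :=
      Finset.sum_congr rfl fun y _ => hmix η y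
    unfold klDiv
    have step : ∀ x ∈ Finset.univ (α := X),
        (P x ^ (1 - η) * QB x ^ η / ∑ y, P y ^ (1 - η) * QB y ^ η) *
          Real.logb 2 ((P x ^ (1 - η) * QB x ^ η / ∑ y, P y ^ (1 - η) * QB y ^ η) / P x)
        = (η * (P x * w x * rexp (η * w x)) - Real.log (Z η) * (P x * rexp (η * w x)))
            / Z η / Real.log 2 := by
      intro x _
      rw [hden, hmix η x]
      have h3 : (P x * rexp (η * w x) / Z η) / P x = rexp (η * w x) / Z η := by
        rw [div_div, mul_comm (Z η) (P x), mul_div_mul_left _ _ (hPpos x).ne']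
      rw [h3, Real.logb, Real.log_div (Real.exp_ne_zero _) (hZpos η).ne', Real.log_exp]
      field_simp
    rw [Finset.sum_congr rfl step]
    rw [← Finset.sum_div, ← Finset.sum_div, Finset.sum_sub_distrib,
      ← Finset.mul_sum, ← Finset.mul_sum]
    rw [hFdef]
    have hZne := (hZpos η).ne'
    field_simp
    ring
  -- derivatives
  have hZd : ∀ η, HasDerivAt Z (N η) η := by
    intro η
    rw [hNdef]
    apply HasDerivAt.fun_sum
    intro x _
    have h := (((hasDerivAt_id η).mul_const (w x)).exp).const_mul (P x)
    refine h.congr_deriv ?_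
    simp only [id_eq]
    ring
  have hNd : ∀ η, HasDerivAt N (M η) η := by
    intro η
    rw [hMdef]
    apply HasDerivAt.fun_sum
    intro x _
    have h := (((hasDerivAt_id η).mul_const (w x)).exp).const_mul (P x * w x)
    refine h.congr_deriv ?_
    simp only [id_eq]
    ring
  have hFd : ∀ η, HasDerivAt F (η * ((M η * Z η - N η ^ 2) / Z η ^ 2) / Real.log 2) η := by
    intro η
    have h1 : HasDerivAt (fun t => t * N t) (N η + η * M η) η := by
      have := (hasDerivAt_id η).mul (hNd η)
      refine this.congr_deriv ?_
      simp only [id_eq]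
      ring
    have h2 : HasDerivAt (fun t => t * N t / Z t)
        (((N η + η * M η) * Z η - η * N η * N η) / Z η ^ 2) η :=
      h1.div (hZd η) (hZpos η).ne'
    have h3 : HasDerivAt (fun t => Real.log (Z t)) (N η / Z η) η :=
      (hZd η).log (hZpos η).ne'
    have h4 := (h2.sub h3).div_const (Real.log 2)
    refine h4.congr_deriv ?_
    have hZne := (hZpos η).ne'
    field_simp
    ring
  -- strict monotonicity of F
  have hmono : StrictMonoOn F (Set.Icc (0:ℝ) 1) := by
    apply strictMonoOn_of_deriv_pos (convex_Icc 0 1)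
    · exact fun η _ => ((hFd η).differentiableAt.continuousAt).continuousWithinAt
    · intro η hη
      rw [interior_Icc] at hη
      rw [(hFd η).deriv]
      have hcs := cs_pos (fun x => P x * rexp (η * w x)) w
        (fun x => mul_pos (hPpos x) (Real.exp_pos _)) hw12
      have hM : (∑ x, (P x * rexp (η * w x)) * w x ^ 2) = M η :=
        Finset.sum_congr rfl fun x _ => by ring
      have hN' : (∑ x, (P x * rexp (η * w x)) * w x) = N η :=
        Finset.sum_congr rfl fun x _ => by ring
      rw [hM, hN'] at hcs
      have : (0:ℝ) < M η * Z η - N η ^ 2 := hcs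
      exact div_pos (mul_pos hη.1 (div_pos this (pow_pos (hZpos η) 2))) hlog2
  refine ⟨?_, ?_⟩
  · have hfun : (fun η => klDiv
        (fun x => P x ^ (1 - η) * QB x ^ η / ∑ y, P y ^ (1 - η) * QB y ^ η) P) = F :=
      funext hkl
    exact hfun ▸ hmono
  · show klDiv (fun x => P x ^ ((1:ℝ) - 0) * QB x ^ (0:ℝ)
        / ∑ y, P y ^ ((1:ℝ) - 0) * QB y ^ (0:ℝ)) P = 0
    have : ∀ x : X, P x ^ ((1:ℝ) - 0) * QB x ^ (0:ℝ) = P x := by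
      intro x
      rw [sub_zero, Real.rpow_one, Real.rpow_zero, mul_one]
    simp only [this, hP1, div_one]
    unfold klDiv
    apply Finset.sum_eq_zero
    intro x _
    rw [div_self (hPpos x).ne', Real.logb_one, mul_zero]
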